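/- arXiv:1007.1632 — 6 statements merged into one kernel-verified Lean document; each statement's English description precedes it below -/
import Mathlib

section
/- Let F be the multilinear extension of a submodular function f : 2^X → ℝ. If x' ≥ x coordinatewise (both in [0,1]^X), then F(x') ≤ F(x) + Σ_{i∈X} (x'_i - x_i) · ∂F/∂x_i evaluated at x, and F(x') ≥ F(x) + Σ_{i∈X} (x'_i - x_i) · ∂F/∂x_i evaluated at x'. -/
def Submodular {X : Type*} [DecidableEq X] (f : Finset X → ℝ) : Prop :=
  ∀ S T : Finset X, f (S ∪ T) + f (S ∩ T) ≤ f S + f T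

/-- The multilinear extension of a set function. -/
def mExt {X : Type*} [Fintype X] [DecidableEq X] (f : Finset X → ℝ) (x : X → ℝ) : ℝ :=
  ∑ S : Finset X, f S * ((∏ i ∈ S, x i) * ∏ j ∈ Sᶜ, (1 - x j))

/-!
The partial derivative `∂F/∂x_i` is the multilinear extension of the discrete derivative
`S ↦ f (S ∪ {i}) - f (S \ {i})`, because `F` is affine in each coordinate and a multiaffine
function is determined by its values on the vertices of the cube. Submodularity says exactly that
these discrete derivatives are antitone set functions, and the multilinear extension of an
antitone set function is antitone on `[0,1]^X`, its own partials being extensions of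
nonpositive functions. By the mean value theorem on the segment from `x` to `x'`,
`F x' - F x = ∑ i, (x' i - x i) * ∂F/∂x_i (z)` for some `z` with `x ≤ z ≤ x'`, and antitonicity of
the partials squeezes this between the two sums of the claim.
-/

open Finset Function

section

variable {X : Type*} [DecidableEq X]

def IsMultiaffine (H : (X → ℝ) → ℝ) : Prop :=
  ∀ y i t, H (update y i t) = (1 - t) * H (update y i 0) + t * H (update y i 1)

def cubeVertex (W : Finset X) : X → ℝ :=
  fun k => if k ∈ W then 1 else 0

@[simp]
lemma cubeVertex_apply (W : Finset X) (k : X) : cubeVertex W k = if k ∈ W then 1 else 0 :=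
  rfl

lemma update_cubeVertex_one (W : Finset X) (i : X) :
    update (cubeVertex W) i 1 = cubeVertex (insert i W) := by
  funext k
  rcases eq_or_ne k i with rfl | h <;> simp [*]

lemma update_cubeVertex_zero (W : Finset X) (i : X) :
    update (cubeVertex W) i 0 = cubeVertex (W.erase i) := by
  funext k
  rcases eq_or_ne k i with rfl | h <;> simp [*]

namespace IsMultiaffine

variable {H G : (X → ℝ) → ℝ}

lemma comp_update (hH : IsMultiaffine H) (m : X) (c : ℝ) :
    IsMultiaffine fun y => H (update y m c) := by
  intro y i t
  rcases eq_or_ne i m with rfl | h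
  · simp only [update_idem]
    ring
  · simp only [update_comm h]
    exact hH _ i t

lemma sub (hH : IsMultiaffine H) (hG : IsMultiaffine G) : IsMultiaffine (H - G) := by
  intro y i t
  simp only [Pi.sub_apply, hH y i t, hG y i t]
  ring

lemma eq_zero_of_forall_cubeVertex [Fintype X] (hH : IsMultiaffine H)
    (hvertex : ∀ W : Finset X, H (cubeVertex W) = 0) : H = 0 := by
  suffices key : ∀ (T : Finset X) (y v : X → ℝ), (∀ k, v k = 0 ∨ v k = 1) →
      H (T.piecewise y v) = 0 by
    funext y
    simpa using key univ y 0 fun _ => Or.inl rfl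
  intro T
  induction T using Finset.induction_on with
  | empty =>
    intro y v hv
    convert hvertex {k | v k = 1} using 2
    funext k
    rcases hv k with h | h <;> simp [h]
  | insert j T hjT ih =>
    intro y v hv
    have hupdate : ∀ c : ℝ, c = 0 ∨ c = 1 → H (update (T.piecewise y v) j c) = 0 := by
      intro c hc
      rw [Finset.update_piecewise_of_notMem _ _ _ hjT]
      refine ih y _ fun k => ?_
      rcases eq_or_ne k j with rfl | h
      · simpa using hc
      · simpa [h] using hv k
    rw [piecewise_insert, hH, hupdate 0 (Or.inl rfl), hupdate 1 (Or.inr rfl)]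
    ring

lemma ext [Fintype X] (hH : IsMultiaffine H) (hG : IsMultiaffine G)
    (h : ∀ W : Finset X, H (cubeVertex W) = G (cubeVertex W)) : H = G :=
  sub_eq_zero.mp <| (hH.sub hG).eq_zero_of_forall_cubeVertex fun W => sub_eq_zero.mpr (h W)

end IsMultiaffine

def discreteDeriv (i : X) (g : Finset X → ℝ) (S : Finset X) : ℝ :=
  g (insert i S) - g (S.erase i)

lemma Submodular.antitone_discreteDeriv {f : Finset X → ℝ} (hf : Submodular f) (i : X) :
    Antitone (discreteDeriv i f) := by
  intro S T hST
  have hunion : insert i S ∪ T.erase i = insert i T := by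
    ext k
    simp only [mem_union, mem_insert, mem_erase]
    grind
  have hinter : insert i S ∩ T.erase i = S.erase i := by
    ext k
    simp only [mem_inter, mem_insert, mem_erase]
    grind
  have := hf (insert i S) (T.erase i)
  rw [hunion, hinter] at this
  simp only [discreteDeriv]
  linarith

section

variable [Fintype X]

lemma isMultiaffine_mExt (g : Finset X → ℝ) : IsMultiaffine (mExt g) := by
  intro y i t
  have one_sub_update : ∀ s : ℝ, (fun j => 1 - update y i s j) = update (1 - y) i (1 - s) := by
    intro s
    funext j
    rcases eq_or_ne j i with rfl | h <;> simp [*]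
  simp only [mExt, mul_sum, ← sum_add_distrib, one_sub_update]
  refine sum_congr rfl fun S _ => ?_
  by_cases hi : i ∈ S
  · have hic : i ∉ Sᶜ := by simpa using hi
    simp only [prod_update_of_mem hi, prod_update_of_notMem hic]
    ring
  · have hic : i ∈ Sᶜ := by simpa using hi
    simp only [prod_update_of_notMem hi, prod_update_of_mem hic]
    ring

lemma mExt_cubeVertex (g : Finset X → ℝ) (W : Finset X) :
    mExt g (cubeVertex W) = g W := by
  rw [mExt, sum_eq_single W (fun S _ hSW => ?_) (by simp)]
  · have hW : ∏ j ∈ W, cubeVertex W j = 1 := prod_eq_one fun j hj => by simp [hj]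
    have hWc : ∏ j ∈ Wᶜ, (1 - cubeVertex W j) = 1 :=
      prod_eq_one fun j hj => by simp [mem_compl.mp hj]
    rw [hW, hWc, mul_one, mul_one]
  by_cases hSW' : S ⊆ W
  · obtain ⟨k, hkW, hkS⟩ := not_subset.mp fun h => hSW (subset_antisymm hSW' h)
    rw [prod_eq_zero (i := k) (mem_compl.mpr hkS) (by simp [hkW]), mul_zero, mul_zero]
  · obtain ⟨k, hkS, hkW⟩ := not_subset.mp hSW'
    rw [prod_eq_zero hkS (by simp [hkW]), zero_mul, mul_zero]

lemma mExt_nonpos {g : Finset X → ℝ} (hg : ∀ S, g S ≤ 0) {y : X → ℝ} (hy : y ∈ Set.Icc 0 1) :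
    mExt g y ≤ 0 :=
  sum_nonpos fun S _ => mul_nonpos_of_nonpos_of_nonneg (hg S) <|
    mul_nonneg (prod_nonneg fun i _ => hy.1 i) (prod_nonneg fun i _ => sub_nonneg.2 (hy.2 i))

lemma mExt_update_one_sub_mExt_update_zero (g : Finset X → ℝ) (y : X → ℝ) (i : X) :
    mExt g (update y i 1) - mExt g (update y i 0) = mExt (discreteDeriv i g) y := by
  have hmarginal := ((isMultiaffine_mExt g).comp_update i 1).sub
    ((isMultiaffine_mExt g).comp_update i 0)
  refine congrFun (hmarginal.ext (isMultiaffine_mExt _) fun W => ?_) y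
  simp only [Pi.sub_apply, update_cubeVertex_one, update_cubeVertex_zero, mExt_cubeVertex,
    discreteDeriv]

lemma differentiable_mExt (g : Finset X → ℝ) : Differentiable ℝ (mExt g) := by
  unfold mExt
  fun_prop

lemma fderiv_mExt_single (g : Finset X → ℝ) (y : X → ℝ) (i : X) :
    fderiv ℝ (mExt g) y (Pi.single i 1) = mExt (discreteDeriv i g) y := by
  have hchain : HasDerivAt (fun t => mExt g (update y i t))
      (fderiv ℝ (mExt g) y (Pi.single i 1)) (y i) := by
    have h := (differentiable_mExt g _).hasFDerivAt.comp_hasDerivAt (y i)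
      (hasDerivAt_update y i (y i))
    rwa [update_eq_self] at h
  have haffine : HasDerivAt (fun t => mExt g (update y i t)) (mExt (discreteDeriv i g) y) (y i) := by
    set A := mExt g (update y i 0)
    set B := mExt g (update y i 1)
    have hline : ∀ t, mExt g (update y i t) = A + t * (B - A) := fun t => by
      rw [isMultiaffine_mExt g y i t]
      ring
    rw [← mExt_update_one_sub_mExt_update_zero, funext hline]
    simpa using ((hasDerivAt_id (y i)).mul_const (B - A)).const_add A
  exact hchain.unique haffine

lemma fderiv_mExt_apply (g : Finset X → ℝ) (y d : X → ℝ) :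
    fderiv ℝ (mExt g) y d = ∑ i, d i * mExt (discreteDeriv i g) y := by
  conv_lhs => rw [← univ_sum_single d]
  simp only [map_sum, ← fderiv_mExt_single]
  refine sum_congr rfl fun i _ => ?_
  rw [← smul_eq_mul, ← map_smul, ← Pi.single_smul', smul_eq_mul, mul_one]

lemma exists_mExt_sub_eq_sum (g : Finset X → ℝ) {y w : X → ℝ} (hyw : y ≤ w) :
    ∃ z ∈ Set.Icc y w, mExt g w - mExt g y = ∑ i, (w i - y i) * mExt (discreteDeriv i g) z := by
  have hline : ∀ t : ℝ, HasDerivAt (fun s : ℝ => mExt g (y + s • (w - y)))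
      (fderiv ℝ (mExt g) (y + t • (w - y)) (w - y)) t := fun t => by
    have h := (differentiable_mExt g _).hasFDerivAt.comp_hasDerivAt t
      (((hasDerivAt_id' t).smul_const (w - y)).const_add y)
    rw [one_smul] at h
    exact h
  obtain ⟨c, hc, hslope⟩ := exists_hasDerivAt_eq_slope _ _ zero_lt_one
    (fun t _ => (hline t).continuousAt.continuousWithinAt) fun t _ => hline t
  refine ⟨y + c • (w - y), (convex_Icc y w).add_smul_sub_mem (Set.left_mem_Icc.2 hyw)
    (Set.right_mem_Icc.2 hyw) (Set.Ioo_subset_Icc_self hc), ?_⟩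
  rw [fderiv_mExt_apply] at hslope
  simp only [Pi.sub_apply, one_smul, zero_smul, add_zero, add_sub_cancel, sub_zero,
    div_one] at hslope
  exact hslope.symm

lemma mExt_antitoneOn {g : Finset X → ℝ} (hg : Antitone g) :
    AntitoneOn (mExt g) (Set.Icc 0 1) := by
  intro y hy w hw hyw
  obtain ⟨z, hz, hmv⟩ := exists_mExt_sub_eq_sum g hyw
  have hderiv_nonpos : ∀ i S, discreteDeriv i g S ≤ 0 := fun i S =>
    sub_nonpos.2 (hg ((erase_subset i S).trans (subset_insert i S)))
  have : ∑ i, (w i - y i) * mExt (discreteDeriv i g) z ≤ 0 :=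
    sum_nonpos fun i _ => mul_nonpos_of_nonneg_of_nonpos (sub_nonneg.2 (hyw i))
      (mExt_nonpos (hderiv_nonpos i) (Set.Icc_subset_Icc hy.1 hw.2 hz))
  linarith

end

end

/-- First-order bounds for the multilinear extension of a submodular function
when increasing coordinates. -/
theorem multilinear_first_order_bounds
    {X : Type*} [Fintype X] [DecidableEq X] (f : Finset X → ℝ) (hf : Submodular f)
    (x x' : X → ℝ) (hx : ∀ i, x i ∈ Set.Icc (0 : ℝ) 1)
    (hx' : ∀ i, x' i ∈ Set.Icc (0 : ℝ) 1) (hle : ∀ i, x i ≤ x' i) :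
    mExt f x' ≤ mExt f x + ∑ i : X, (x' i - x i) * fderiv ℝ (mExt f) x (Pi.single i 1) ∧
      mExt f x + ∑ i : X, (x' i - x i) * fderiv ℝ (mExt f) x' (Pi.single i 1) ≤ mExt f x' := by
  have hxcube : x ∈ Set.Icc (0 : X → ℝ) 1 := ⟨fun i => (hx i).1, fun i => (hx i).2⟩
  have hx'cube : x' ∈ Set.Icc (0 : X → ℝ) 1 := ⟨fun i => (hx' i).1, fun i => (hx' i).2⟩
  obtain ⟨z, hz, hmv⟩ := exists_mExt_sub_eq_sum f hle
  have hzcube : z ∈ Set.Icc (0 : X → ℝ) 1 := Set.Icc_subset_Icc hxcube.1 hx'cube.2 hz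
  have hpartial_antitone i := mExt_antitoneOn (hf.antitone_discreteDeriv i)
  simp only [fderiv_mExt_single]
  constructor
  · have := sum_le_sum fun i (_ : i ∈ univ) => mul_le_mul_of_nonneg_left
      (hpartial_antitone i hxcube hzcube hz.1) (sub_nonneg.2 (hle i))
    linarith
  · have := sum_le_sum fun i (_ : i ∈ univ) => mul_le_mul_of_nonneg_left
      (hpartial_antitone i hzcube hx'cube hz.2) (sub_nonneg.2 (hle i))
    linarith
end

section
/- Threshold lemma: Let F be the multilinear extension of a submodular function f : 2^X → ℝ₊, let y ∈ [0,1]^X, and for λ ∈ [0,1] define T_{>λ}(y) = {i ∈ X : y_i > λ}. Then F(y) ≥ E[f(T_{>λ}(y))] where λ is uniformly random in [0,1]. -/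
/-!
Fix all coordinates of `y` but one, `y i = a`. The multilinear extension is affine in `a`, so it
equals `a * F(y[i ↦ 1]) + (1 - a) * F(y[i ↦ 0])`. The Lovász extension is
`∫₀^a f(T_t(y[i ↦ 1])) dt + ∫ₐ¹ f(T_t(y[i ↦ 0])) dt`, whose derivative in `a` is the marginal value
of `i` at `T_a(y[i ↦ 0])`; since `T_a` shrinks as `a` grows, submodularity makes this derivative
nondecreasing, so the Lovász extension lies below the same interpolation. Rounding the coordinates
to `0` or `1` one at a time thus never decreases the Lovász extension and keeps the multilinear
extension fixed, and at the vertices of the cube both extensions equal `f`.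
-/

open MeasureTheory

open Finset Function

theorem Submodular.insert_sub_le_insert_sub {X : Type*} [DecidableEq X] {f : Finset X → ℝ}
    (hf : Submodular f) {A B : Finset X} {i : X} (hBA : B ⊆ A) (hiA : i ∉ A) :
    f (insert i A) - f A ≤ f (insert i B) - f B := by
  have h := hf (insert i B) A
  rw [insert_union, union_eq_right.2 hBA, insert_inter_of_notMem hiA,
    inter_eq_left.2 hBA] at h
  linarith

theorem integral_splice_le {g g₀ g₁ : ℝ → ℝ} {a m : ℝ} (ha : a ∈ Set.Icc (0 : ℝ) 1)
    (hg : IntervalIntegrable g volume 0 1) (hg₀ : IntervalIntegrable g₀ volume 0 1)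
    (hg₁ : IntervalIntegrable g₁ volume 0 1)
    (hg_lt : Set.EqOn g g₁ (Set.Ioo 0 a)) (hg_gt : Set.EqOn g g₀ (Set.Ioo a 1))
    (hm_lt : ∀ t ∈ Set.Ioo 0 a, g₁ t - g₀ t ≤ m) (hm_gt : ∀ t ∈ Set.Ioo a 1, m ≤ g₁ t - g₀ t) :
    ∫ t in 0..1, g t ≤ a * (∫ t in 0..1, g₁ t) + (1 - a) * ∫ t in 0..1, g₀ t := by
  have ha' : a ∈ Set.uIcc (0 : ℝ) 1 := by rwa [Set.uIcc_of_le zero_le_one]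
  have hsplit {φ : ℝ → ℝ} (hφ : IntervalIntegrable φ volume 0 1) :
      IntervalIntegrable φ volume 0 a ∧ IntervalIntegrable φ volume a 1 ∧
        ∫ t in 0..1, φ t = (∫ t in 0..a, φ t) + ∫ t in a..1, φ t := by
    have h0a := hφ.mono_set (Set.uIcc_subset_uIcc Set.left_mem_uIcc ha')
    have ha1 := hφ.mono_set (Set.uIcc_subset_uIcc ha' Set.right_mem_uIcc)
    exact ⟨h0a, ha1, (intervalIntegral.integral_add_adjacent_intervals h0a ha1).symm⟩
  obtain ⟨-, -, hg_eq⟩ := hsplit hg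
  obtain ⟨hg₀_0a, hg₀_a1, hg₀_eq⟩ := hsplit hg₀
  obtain ⟨hg₁_0a, hg₁_a1, hg₁_eq⟩ := hsplit hg₁
  have below : (∫ t in 0..a, g₁ t) - ∫ t in 0..a, g₀ t ≤ a * m := by
    rw [← intervalIntegral.integral_sub hg₁_0a hg₀_0a]
    calc _ ≤ ∫ _ in 0..a, m :=
          intervalIntegral.integral_mono_on_of_le_Ioo ha.1 (hg₁_0a.sub hg₀_0a)
            intervalIntegrable_const hm_lt
      _ = a * m := by simp
  have above : (1 - a) * m ≤ (∫ t in a..1, g₁ t) - ∫ t in a..1, g₀ t := by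
    rw [← intervalIntegral.integral_sub hg₁_a1 hg₀_a1]
    calc (1 - a) * m = ∫ _ in a..1, m := by simp
      _ ≤ _ := intervalIntegral.integral_mono_on_of_le_Ioo ha.2 intervalIntegrable_const
            (hg₁_a1.sub hg₀_a1) hm_gt
  rw [hg_eq, hg₀_eq, hg₁_eq, intervalIntegral.integral_congr_Ioo_of_le ha.1 hg_lt,
    intervalIntegral.integral_congr_Ioo_of_le ha.2 hg_gt]
  nlinarith [mul_le_mul_of_nonneg_left below (sub_nonneg.2 ha.2),
    mul_le_mul_of_nonneg_left above ha.1]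

section MultilinearExtension

variable {X : Type*} [Fintype X]

theorem eq_indicator_of_forall_eq_zero_or_eq_one {x : X → ℝ} (hx : ∀ j, x j = 0 ∨ x j = 1) :
    x = ((univ.filter fun j => x j = 1 : Finset X) : Set X).indicator 1 := by
  funext j
  rcases hx j with h | h <;> simp [h]

variable [DecidableEq X]

theorem mExt_eq_sum_prod_ite (f : Finset X → ℝ) (x : X → ℝ) :
    mExt f x = ∑ S, f S * ∏ j, if j ∈ S then x j else 1 - x j := by
  simp only [mExt, prod_ite, filter_not, filter_mem_eq_inter, univ_inter, compl_eq_univ_sdiff]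

theorem mExt_update (f : Finset X → ℝ) (x : X → ℝ) (i : X) :
    mExt f x = x i * mExt f (update x i 1) + (1 - x i) * mExt f (update x i 0) := by
  simp only [mExt_eq_sum_prod_ite, mul_sum, ← sum_add_distrib]
  refine sum_congr rfl fun S _ => ?_
  have hrest (v : ℝ) : ∏ j ∈ {i}ᶜ, (if j ∈ S then update x i v j else 1 - update x i v j) =
      ∏ j ∈ {i}ᶜ, (if j ∈ S then x j else 1 - x j) :=
    prod_congr rfl fun j hj => by rw [update_of_ne (by simpa using hj)]
  simp only [Fintype.prod_eq_mul_prod_compl i, hrest, update_self]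
  split_ifs <;> ring

theorem mExt_indicator (f : Finset X → ℝ) (S : Finset X) :
    mExt f ((S : Set X).indicator 1) = f S := by
  have hweight (T : Finset X) :
      (∏ j, if j ∈ T then (S : Set X).indicator 1 j else 1 - (S : Set X).indicator 1 j) =
        if T = S then (1 : ℝ) else 0 := by
    have (j : X) : (if j ∈ T then (S : Set X).indicator 1 j else 1 - (S : Set X).indicator 1 j) =
        if (j ∈ T ↔ j ∈ S) then (1 : ℝ) else 0 := by
      by_cases hT : j ∈ T <;> by_cases hS : j ∈ S <;> simp [hT, hS]
    simp only [this, Fintype.prod_boole, ← Finset.ext_iff]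
  simp [mExt_eq_sum_prod_ite, hweight]

theorem le_mExt_of_le_interp_update {φ : (X → ℝ) → ℝ}
    (hφ : ∀ x, (∀ j, x j ∈ Set.Icc (0 : ℝ) 1) → ∀ i,
      φ x ≤ x i * φ (update x i 1) + (1 - x i) * φ (update x i 0))
    {x : X → ℝ} (hx : ∀ j, x j ∈ Set.Icc (0 : ℝ) 1) :
    φ x ≤ mExt (fun S => φ ((S : Set X).indicator 1)) x := by
  suffices ∀ s : Finset X, ∀ x : X → ℝ, (∀ j, x j ∈ Set.Icc (0 : ℝ) 1) →
      (∀ j ∉ s, x j = 0 ∨ x j = 1) → φ x ≤ mExt (fun S => φ ((S : Set X).indicator 1)) x from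
    this univ x hx fun j hj => absurd (mem_univ j) hj
  intro s
  induction s using Finset.induction_on with
  | empty =>
    intro x _ hbool
    have hxS := eq_indicator_of_forall_eq_zero_or_eq_one fun j => hbool j (notMem_empty j)
    conv_rhs => rw [hxS, mExt_indicator]
    rw [← hxS]
  | insert i s _ ih =>
    intro x hx hbool
    have hupdate (v : ℝ) (hv : v = 0 ∨ v = 1) :
        φ (update x i v) ≤ mExt (fun S => φ ((S : Set X).indicator 1)) (update x i v) := by
      refine ih _ ?_ ?_
      · rw [forall_update_iff _ fun _ w => w ∈ Set.Icc (0 : ℝ) 1]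
        exact ⟨by rcases hv with rfl | rfl <;> simp, fun j _ => hx j⟩
      · intro j hj
        by_cases hji : j = i
        · subst hji; simpa using hv
        · simpa [hji] using hbool j (by simp [hji, hj])
    have hxi := hx i
    rw [mExt_update _ x i]
    calc φ x ≤ x i * φ (update x i 1) + (1 - x i) * φ (update x i 0) := hφ x hx i
      _ ≤ _ := add_le_add (mul_le_mul_of_nonneg_left (hupdate 1 (.inr rfl)) hxi.1)
        (mul_le_mul_of_nonneg_left (hupdate 0 (.inl rfl)) (by linarith [hxi.2]))

end MultilinearExtension

section LovaszExtension

variable {X : Type*} [Fintype X]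

noncomputable def thresholdSet (y : X → ℝ) (t : ℝ) : Finset X := univ.filter fun i => t < y i

@[simp]
theorem mem_thresholdSet {y : X → ℝ} {t : ℝ} {i : X} : i ∈ thresholdSet y t ↔ t < y i := by
  simp [thresholdSet]

theorem thresholdSet_antitone (y : X → ℝ) : Antitone (thresholdSet y) :=
  fun _ _ hst _ => by simpa using hst.trans_lt

theorem measurable_comp_thresholdSet (g : Finset X → ℝ) (y : X → ℝ) :
    Measurable fun t => g (thresholdSet y t) := by
  have hdecide : Measurable fun t (i : X) => decide (t < y i) :=
    measurable_pi_lambda _ fun i => measurable_to_bool <| by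
      convert measurableSet_Iio (a := y i)
      ext; simp
  have hfactor : (fun t => g (thresholdSet y t)) =
      (fun b : X → Bool => g (univ.filter fun i => b i)) ∘ fun t i => decide (t < y i) := by
    funext t; simp [thresholdSet]
  rw [hfactor]
  exact (measurable_of_finite _).comp hdecide

theorem intervalIntegrable_comp_thresholdSet (g : Finset X → ℝ) (y : X → ℝ) (u v : ℝ) :
    IntervalIntegrable (fun t => g (thresholdSet y t)) volume u v := by
  have hbound : ∀ t, ‖g (thresholdSet y t)‖ ≤ ∑ S, ‖g S‖ := fun t =>
    single_le_sum (fun S _ => norm_nonneg (g S)) (mem_univ _)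
  have hmeas := (measurable_comp_thresholdSet g y).aestronglyMeasurable (μ := volume)
  exact ⟨Integrable.of_bound hmeas.restrict _ (ae_of_all _ hbound),
    Integrable.of_bound hmeas.restrict _ (ae_of_all _ hbound)⟩

theorem thresholdSet_indicator [DecidableEq X] (S : Finset X) {t : ℝ} (ht : t ∈ Set.Ioo 0 1) :
    thresholdSet ((S : Set X).indicator 1) t = S := by
  ext i
  by_cases hi : i ∈ S <;> simp [hi, ht.2, ht.1.le]

theorem thresholdSet_update_of_iff [DecidableEq X] {y : X → ℝ} {i : X} {v t : ℝ}
    (h : t < v ↔ t < y i) : thresholdSet (update y i v) t = thresholdSet y t := by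
  ext j
  by_cases hj : j = i
  · subst hj; simpa using h
  · simp [hj]

theorem thresholdSet_update_one [DecidableEq X] (y : X → ℝ) (i : X) {t : ℝ} (ht : t < 1) :
    thresholdSet (update y i 1) t = insert i (thresholdSet (update y i 0) t) := by
  ext j
  by_cases hj : j = i
  · subst hj; simpa using ht
  · simp [hj]

theorem notMem_thresholdSet_update_zero [DecidableEq X] (y : X → ℝ) (i : X) {t : ℝ}
    (ht : 0 ≤ t) : i ∉ thresholdSet (update y i 0) t := by
  simpa using ht

noncomputable def lovaszExt (f : Finset X → ℝ) (y : X → ℝ) : ℝ :=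
  ∫ t in Set.Icc (0 : ℝ) 1, f (thresholdSet y t)

theorem lovaszExt_eq_intervalIntegral (f : Finset X → ℝ) (y : X → ℝ) :
    lovaszExt f y = ∫ t in 0..1, f (thresholdSet y t) := by
  rw [lovaszExt, integral_Icc_eq_integral_Ioc, intervalIntegral.integral_of_le zero_le_one]

theorem lovaszExt_indicator [DecidableEq X] (f : Finset X → ℝ) (S : Finset X) :
    lovaszExt f ((S : Set X).indicator 1) = f S := by
  rw [lovaszExt_eq_intervalIntegral,
    intervalIntegral.integral_congr_Ioo_of_le zero_le_one (g := fun _ => f S)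
      fun t ht => congrArg f (thresholdSet_indicator S ht)]
  simp

theorem lovaszExt_le_interp_update [DecidableEq X] {f : Finset X → ℝ} (hf : Submodular f)
    {y : X → ℝ} {i : X} (hyi : y i ∈ Set.Icc (0 : ℝ) 1) :
    lovaszExt f y ≤
      y i * lovaszExt f (update y i 1) + (1 - y i) * lovaszExt f (update y i 0) := by
  simp only [lovaszExt_eq_intervalIntegral]
  set T₀ := thresholdSet (update y i 0)
  refine integral_splice_le hyi (intervalIntegrable_comp_thresholdSet _ _ _ _)
    (intervalIntegrable_comp_thresholdSet _ _ _ _) (intervalIntegrable_comp_thresholdSet _ _ _ _)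
    (m := f (insert i (T₀ (y i))) - f (T₀ (y i))) ?_ ?_ ?_ ?_
  · intro t ht
    have h : t < 1 ↔ t < y i := iff_of_true (ht.2.trans_le hyi.2) ht.2
    exact congrArg f (thresholdSet_update_of_iff h).symm
  · intro t ht
    have h : t < 0 ↔ t < y i := iff_of_false (by linarith [ht.1, hyi.1]) (by linarith [ht.1])
    exact congrArg f (thresholdSet_update_of_iff h).symm
  · intro t ht
    rw [thresholdSet_update_one y i (ht.2.trans_le hyi.2)]
    exact hf.insert_sub_le_insert_sub (thresholdSet_antitone _ ht.2.le)
      (notMem_thresholdSet_update_zero y i ht.1.le)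
  · intro t ht
    rw [thresholdSet_update_one y i ht.2]
    exact hf.insert_sub_le_insert_sub (thresholdSet_antitone _ ht.1.le)
      (notMem_thresholdSet_update_zero y i hyi.1)

end LovaszExtension

theorem threshold_lemma_general
    {X : Type*} [Fintype X] [DecidableEq X] (f : Finset X → ℝ)
    (hf : Submodular f)
    (y : X → ℝ) (hy : ∀ i, y i ∈ Set.Icc (0 : ℝ) 1) :
    (∫ t in Set.Icc (0 : ℝ) 1, f (Finset.univ.filter fun i => t < y i)) ≤ mExt f y := by
  have h := le_mExt_of_le_interp_update (fun x hx i => lovaszExt_le_interp_update hf (hx i)) hy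
  simp only [lovaszExt_indicator] at h
  exact h

/-- Threshold lemma: the multilinear extension dominates the expectation of `f` on the
threshold set `T_{>λ}(y)` for a uniformly random threshold `λ ∈ [0,1]`. -/
theorem threshold_lemma
    {X : Type*} [Fintype X] [DecidableEq X] (f : Finset X → ℝ)
    (hf0 : ∀ S, 0 ≤ f S) (hf : Submodular f)
    (y : X → ℝ) (hy : ∀ i, y i ∈ Set.Icc (0 : ℝ) 1) :
    (∫ t in Set.Icc (0 : ℝ) 1, f (Finset.univ.filter fun i => t < y i)) ≤ mExt f y :=
  threshold_lemma_general f hf y hy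
end

section
/- Solution of the annealing differential inequality: Suppose Φ : (p₀, 1) → ℝ is differentiable, satisfies (1-p)Φ'(p) ≥ 1 - 2Φ(p) - (2p-1)β for all p ∈ (p₀,1), is continuous at p₀ with Φ(p₀) = v₀, where 1/2 < p₀ < 1 and β ≥ 0. Then for every p ∈ (p₀, 1): Φ(p) ≥ (1-β)/2 + 2β(1-p) - ((1-p)²/(1-p₀)²)·((1-β)/2 + 2β(1-p₀) - v₀). -/
/-!
Subtracting the particular solution `(1 - β) / 2 + 2β(1 - p)` of the associated linear ODE
turns the inequality into `(1 - p) ψ' + 2ψ ≥ 0`, i.e. the integrating factor `(1 - p)⁻²`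
makes `ψ / (1 - p)²` nondecreasing. Comparing its values at `p₀` and `p` gives the bound.
-/

open Set

lemma continuousOn_Ico_of_hasDerivAt {f f' : ℝ → ℝ} {a b : ℝ}
    (hf : ContinuousWithinAt f (Ici a) a) (hderiv : ∀ x ∈ Ioo a b, HasDerivAt f (f' x) x) :
    ContinuousOn f (Ico a b) := by
  intro x hx
  rcases hx.1.eq_or_lt with rfl | hax
  · exact hf.mono Ico_subset_Ici_self
  · exact (hderiv x ⟨hax, hx.2⟩).continuousAt.continuousWithinAt

lemma HasDerivAt.div_one_sub_pow {f : ℝ → ℝ} {f' x : ℝ} (n : ℕ) (hf : HasDerivAt f f' x)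
    (hx : x ≠ 1) :
    HasDerivAt (fun y => f y / (1 - y) ^ n) (((1 - x) * f' + n * f x) / (1 - x) ^ (n + 1)) x := by
  have hx' : 1 - x ≠ 0 := sub_ne_zero.2 hx.symm
  have hpow : HasDerivAt (fun y => (1 - y) ^ n) (n * (1 - x) ^ (n - 1) * -1) x :=
    ((hasDerivAt_id' x).const_sub 1).pow n
  refine (hf.div hpow (pow_ne_zero n hx')).congr_deriv ?_
  cases n with
  | zero => field_simp; ring
  | succ n => field_simp; push_cast; ring

theorem monotoneOn_div_one_sub_pow {f f' : ℝ → ℝ} {a b : ℝ} (n : ℕ) (hb : b ≤ 1)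
    (hf : ContinuousWithinAt f (Ici a) a) (hderiv : ∀ x ∈ Ioo a b, HasDerivAt f (f' x) x)
    (hineq : ∀ x ∈ Ioo a b, 0 ≤ (1 - x) * f' x + n * f x) :
    MonotoneOn (fun x => f x / (1 - x) ^ n) (Ico a b) := by
  have hlt : ∀ x ∈ Ico a b, x < 1 := fun x hx => hx.2.trans_le hb
  refine monotoneOn_of_hasDerivWithinAt_nonneg (convex_Ico a b)
    (f' := fun x => ((1 - x) * f' x + n * f x) / (1 - x) ^ (n + 1))
    ((continuousOn_Ico_of_hasDerivAt hf hderiv).div (by fun_prop)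
      fun x hx => pow_ne_zero n (sub_ne_zero.2 (hlt x hx).ne'))
    (fun x hx => ?_) (fun x hx => ?_) <;> rw [interior_Ico] at hx
  · exact ((hderiv x hx).div_one_sub_pow n (hlt x (Ioo_subset_Ico_self hx)).ne).hasDerivWithinAt
  · exact div_nonneg (hineq x hx) (pow_nonneg (sub_nonneg.2 (hlt x (Ioo_subset_Ico_self hx)).le) _)

theorem annealing_differential_inequality_general
    (Φ Φ' : ℝ → ℝ) (p₀ v₀ β : ℝ)
    (hderiv : ∀ p ∈ Set.Ioo p₀ 1, HasDerivAt Φ (Φ' p) p)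
    (hineq : ∀ p ∈ Set.Ioo p₀ 1, 1 - 2 * Φ p - (2 * p - 1) * β ≤ (1 - p) * Φ' p)
    (hcont : ContinuousWithinAt Φ (Set.Ici p₀) p₀)
    (hinit : Φ p₀ = v₀) :
    ∀ p ∈ Set.Ioo p₀ 1,
      (1 - β) / 2 + 2 * β * (1 - p) -
        ((1 - p) ^ 2 / (1 - p₀) ^ 2) * ((1 - β) / 2 + 2 * β * (1 - p₀) - v₀) ≤ Φ p := by
  intro p hp
  set ψ : ℝ → ℝ := fun q => Φ q - ((1 - β) / 2 + 2 * β * (1 - q)) with hψ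
  have hψderiv : ∀ q ∈ Ioo p₀ 1, HasDerivAt ψ (Φ' q + 2 * β) q := fun q hq =>
    ((hderiv q hq).fun_sub
      ((((hasDerivAt_id' q).const_sub 1).const_mul (2 * β)).const_add _)).congr_deriv (by ring)
  have hψineq : ∀ q ∈ Ioo p₀ 1, 0 ≤ (1 - q) * (Φ' q + 2 * β) + (2 : ℕ) * ψ q :=
    fun q hq => by simp only [hψ]; push_cast; linear_combination hineq q hq
  have hψcont : ContinuousWithinAt ψ (Ici p₀) p₀ := by fun_prop
  have hmono := monotoneOn_div_one_sub_pow 2 le_rfl hψcont hψderiv hψineq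
    (left_mem_Ico.2 (hp.1.trans hp.2)) ⟨hp.1.le, hp.2⟩ hp.1.le
  have hmono' := (le_div_iff₀ (pow_pos (sub_pos.2 hp.2) 2)).1 hmono
  simp only [hψ, hinit] at hmono'
  linear_combination hmono'

/-- Solution of the annealing differential inequality
`(1-p) Φ'(p) ≥ 1 - 2Φ(p) - (2p-1)β` with `Φ(p₀) = v₀`. -/
theorem annealing_differential_inequality
    (Φ Φ' : ℝ → ℝ) (p₀ v₀ β : ℝ)
    (hp₀ : 1 / 2 < p₀) (hp₁ : p₀ < 1) (hβ : 0 ≤ β)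
    (hderiv : ∀ p ∈ Set.Ioo p₀ 1, HasDerivAt Φ (Φ' p) p)
    (hineq : ∀ p ∈ Set.Ioo p₀ 1, 1 - 2 * Φ p - (2 * p - 1) * β ≤ (1 - p) * Φ' p)
    (hcont : ContinuousWithinAt Φ (Set.Ici p₀) p₀)
    (hinit : Φ p₀ = v₀) :
    ∀ p ∈ Set.Ioo p₀ 1,
      (1 - β) / 2 + 2 * β * (1 - p) -
        ((1 - p) ^ 2 / (1 - p₀) ^ 2) * ((1 - β) / 2 + 2 * β * (1 - p₀) - v₀) ≤ Φ p :=
  annealing_differential_inequality_general Φ Φ' p₀ v₀ β hderiv hineq hcont hinit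
end

section
/- Local-search guarantee under a matroid constraint: Let f : 2^X → ℝ₊ be submodular and M a matroid on X with independent sets I. If S ∈ I is a local optimum in the sense that f cannot be increased by adding, deleting, or swapping a single element within I, then for any C ∈ I, 2·f(S) ≥ f(S ∪ C) + f(S ∩ C) ≥ f(S ∪ C). -/
/-!
Submodularity bounds `f (S ∪ C) - f S` by the sum of the marginal gains `f (S + b) - f S` over
`b ∈ C \ S`. A gain is nonpositive when `S + b` is independent, by add-optimality. The remaining
`b` are matched injectively (Hall's theorem, via a matroid exchange argument) to elements
`σ b ∈ S \ C` with `S - σ b + b` independent; by submodularity and swap-optimality the gain of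
`b` is at most the loss `f S - f (S - σ b)`. These losses are nonnegative by delete-optimality,
and by submodularity their sum over `S \ C` is at most `f S - f (S ∩ C)`.
-/

open Set

/-- Submodularity for set functions. -/
def SubmodularOn {X : Type*} (f : Set X → ℝ) : Prop :=
  ∀ S T : Set X, f (S ∪ T) + f (S ∩ T) ≤ f S + f T

namespace SubmodularOn

variable {X : Type*} {f : Set X → ℝ}

theorem insert_sub_le_of_subset (hf : SubmodularOn f) {A B : Set X} {b : X} (hAB : A ⊆ B)
    (hb : b ∉ B) : f (insert b B) - f B ≤ f (insert b A) - f A := by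
  have h := hf (insert b A) B
  rw [insert_union, union_eq_right.2 hAB, insert_inter_of_notMem hb, inter_eq_left.2 hAB] at h
  linarith

theorem le_add_sum_insert_sub [DecidableEq X] (hf : SubmodularOn f) (S : Set X) (T : Finset X) :
    f (S ∪ T) ≤ f S + ∑ b ∈ T, (f (insert b S) - f S) := by
  induction T using Finset.induction_on with
  | empty => simp
  | insert a T ha ih =>
    have h := hf (insert a S) (S ∪ T)
    have hunion : insert a S ∪ (S ∪ T) = S ∪ ↑(insert a T) := by
      ext; grind
    have hinter : insert a S ∩ (S ∪ T) = S := by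
      ext; grind
    rw [hunion, hinter] at h
    rw [Finset.sum_insert ha]
    linarith

theorem sum_sub_sdiff_singleton_le [DecidableEq X] (hf : SubmodularOn f) (S : Set X)
    (E : Finset X) : ∑ e ∈ E, (f S - f (S \ {e})) ≤ f S - f (S \ E) := by
  induction E using Finset.induction_on with
  | empty => simp
  | insert a E ha ih =>
    have h := hf (S \ {a}) (S \ E)
    have hunion : S \ {a} ∪ S \ E = S := by
      ext; grind
    have hinter : S \ {a} ∩ (S \ E) = S \ ↑(insert a E) := by
      ext; grind
    rw [hunion, hinter] at h
    rw [Finset.sum_insert ha]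
    linarith

end SubmodularOn

theorem Finset.sum_le_sum_of_injOn_of_nonpos {ι κ : Type*} [DecidableEq κ]
    {s : Finset ι} {t : Finset κ} (p : ι → Prop) [DecidablePred p] {σ : ι → κ}
    {g : ι → ℝ} {h : κ → ℝ}
    (hσ : ∀ i ∈ s, p i → σ i ∈ t) (hinj : InjOn σ {i | i ∈ s ∧ p i})
    (hg : ∀ i ∈ s, p i → g i ≤ h (σ i)) (hg' : ∀ i ∈ s, ¬ p i → g i ≤ 0)
    (hh : ∀ j ∈ t, 0 ≤ h j) : ∑ i ∈ s, g i ≤ ∑ j ∈ t, h j := by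
  have himage : ∑ i ∈ s with p i, h (σ i) = ∑ j ∈ (s.filter p).image σ, h j :=
    (Finset.sum_image fun i hi j hj hij => hinj (by simpa using hi) (by simpa using hj) hij).symm
  calc ∑ i ∈ s, g i = ∑ i ∈ s with p i, g i + ∑ i ∈ s with ¬ p i, g i :=
        (Finset.sum_filter_add_sum_filter_not s p g).symm
    _ ≤ ∑ i ∈ s with p i, h (σ i) + 0 := by
        gcongr with i hi
        · exact hg i (Finset.mem_filter.1 hi).1 (Finset.mem_filter.1 hi).2
        · exact Finset.sum_nonpos fun i hi =>
            hg' i (Finset.mem_filter.1 hi).1 (Finset.mem_filter.1 hi).2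
    _ ≤ ∑ j ∈ t, h j := by
        rw [add_zero, himage]
        refine Finset.sum_le_sum_of_subset_of_nonneg ?_ fun j hj _ => hh j hj
        simp only [Finset.image_subset_iff, Finset.mem_filter]
        exact fun i hi => hσ i hi.1 hi.2

theorem Set.exists_injOn_of_forall_encard_le {α β : Type*} [Nonempty β] {D : Set α}
    {r : α → β → Prop} (hr : ∀ a ∈ D, {b | r a b}.Finite)
    (hall : ∀ A ⊆ D, A.Finite → A.encard ≤ {b | ∃ a ∈ A, r a b}.encard) :
    ∃ σ : α → β, InjOn σ D ∧ ∀ a ∈ D, r a (σ a) := by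
  classical
  let t : D → Finset β := fun a => (hr a a.2).toFinset
  have hcard : ∀ s : Finset D, s.card ≤ (s.biUnion t).card := by
    intro s
    have hA : (Subtype.val '' (s : Set D)).encard = s.card := by
      rw [Subtype.val_injective.injOn.encard_image, encard_coe_eq_coe_finsetCard]
    have hN : {b | ∃ a ∈ Subtype.val '' (s : Set D), r a b} = (s.biUnion t : Set β) := by
      ext b; simp [t]
    have := hall _ (Subtype.coe_image_subset D s) (s.finite_toSet.image _)
    rwa [hA, hN, encard_coe_eq_coe_finsetCard, Nat.cast_le] at this
  obtain ⟨g, hginj, hg⟩ := (Finset.all_card_le_biUnion_card_iff_exists_injective t).1 hcard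
  refine ⟨fun a => if h : a ∈ D then g ⟨a, h⟩ else Classical.arbitrary β, ?_, ?_⟩
  · intro a ha a' ha' h
    simp only [dif_pos ha, dif_pos ha'] at h
    exact congrArg Subtype.val (hginj h)
  · intro a ha
    simpa [dif_pos ha, t] using hg ⟨a, ha⟩

namespace Matroid

variable {α : Type*} {M : Matroid α} {I J : Set α}

theorem Indep.closure_sdiff_eq (hI : M.Indep I) (F : Set α) :
    M.closure (I \ F) = M.closure I ∩ ⋂ e ∈ F, M.closure (I \ {e}) := by
  have h := hI.closure_sInter_eq_biInter_closure_of_forall_subset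
    (Js := insert I ((fun e => I \ {e}) '' F)) (insert_nonempty _ _) (by simp)
  have hinter : ⋂₀ insert I ((fun e => I \ {e}) '' F) = I \ F := by
    ext x
    simp only [sInter_insert, sInter_image, mem_inter_iff, mem_iInter, mem_sdiff, mem_singleton_iff]
    grind
  rwa [hinter, biInter_insert, biInter_image] at h

-- Each `b ∈ A` is spanned by `I - e` for every `e ∈ (I \ J) \ N`, hence by their intersection
-- `(I ∩ J) ∪ N`; since `A ∪ (I ∩ J) ⊆ J` is independent, `|A| ≤ |N|`.
theorem Indep.encard_le_encard_exchangeable (hI : M.Indep I) (hJ : M.Indep J) (hIfin : I.Finite)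
    {A : Set α} (hA : A ⊆ {b | b ∈ J \ I ∧ ¬ M.Indep (insert b I)}) :
    A.encard ≤ {e | ∃ b ∈ A, e ∈ I \ J ∧ M.Indep (insert b (I \ {e}))}.encard := by
  set N := {e | ∃ b ∈ A, e ∈ I \ J ∧ M.Indep (insert b (I \ {e}))}
  have hNIJ : N ⊆ I \ J := fun e ⟨_, _, he, _⟩ => he
  have hY : (I ∩ J) ∪ N = I \ ((I \ J) \ N) := by
    ext x; have := @hNIJ x; grind
  have hAcl : A ⊆ M.closure ((I ∩ J) ∪ N) := by
    intro b hb
    obtain ⟨⟨hbJ, -⟩, hdep⟩ := hA hb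
    rw [hY, hI.closure_sdiff_eq]
    refine ⟨hI.mem_closure_iff'.2 ⟨hJ.subset_ground hbJ, fun h => absurd h hdep⟩, ?_⟩
    exact mem_iInter₂.2 fun e he => (hI.sdiff {e}).mem_closure_iff'.2
      ⟨hJ.subset_ground hbJ, fun h => (he.2 ⟨b, hb, he.1, h⟩).elim⟩
  have hYE : (I ∩ J) ∪ N ⊆ M.E := hY ▸ sdiff_subset.trans hI.subset_ground
  have hAJ : M.Indep (A ∪ (I ∩ J)) :=
    hJ.subset (union_subset (fun b hb => (hA hb).1.1) inter_subset_right)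
  have hcount : A.encard + (I ∩ J).encard ≤ N.encard + (I ∩ J).encard := calc
    A.encard + (I ∩ J).encard = (A ∪ (I ∩ J)).encard :=
      (encard_union_eq (disjoint_left.2 fun b hb hb' => (hA hb).1.2 hb'.1)).symm
    _ ≤ M.eRk (M.closure ((I ∩ J) ∪ N)) := hAJ.encard_le_eRk_of_subset
      (union_subset hAcl (subset_union_left.trans (M.subset_closure _ hYE)))
    _ = M.eRk ((I ∩ J) ∪ N) := M.eRk_closure_eq _
    _ ≤ ((I ∩ J) ∪ N).encard := M.eRk_le_encard _
    _ ≤ N.encard + (I ∩ J).encard := (encard_union_le _ _).trans_eq (add_comm _ _)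
  have hfin : (I ∩ J).encard ≠ ⊤ := (hIfin.subset inter_subset_left).encard_lt_top.ne
  exact (ENat.add_le_add_iff_right hfin).1 hcount

theorem Indep.exists_injOn_exchange (hI : M.Indep I) (hJ : M.Indep J) (hIfin : I.Finite) :
    ∃ σ : α → α, InjOn σ {b | b ∈ J \ I ∧ ¬ M.Indep (insert b I)} ∧
      ∀ b ∈ J \ I, ¬ M.Indep (insert b I) →
        σ b ∈ I \ J ∧ M.Indep (insert b (I \ {σ b})) := by
  rcases isEmpty_or_nonempty α with _ | _
  · exact ⟨id, injOn_id _, fun b => isEmptyElim b⟩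
  obtain ⟨σ, hinj, hσ⟩ := Set.exists_injOn_of_forall_encard_le
    (fun b _ => hIfin.subset fun e he => he.1.1)
    (fun A hA _ => hI.encard_le_encard_exchangeable hJ hIfin hA)
  exact ⟨σ, hinj, fun b hb hdep => hσ b ⟨hb, hdep⟩⟩

end Matroid

/-- Local-search guarantee under a matroid constraint (Lemma 2.2 of LMNS):
if `S` is independent and locally optimal with respect to adding, deleting and swapping
single elements, then for any independent `C`,
`2 f(S) ≥ f(S ∪ C) + f(S ∩ C) ≥ f(S ∪ C)`. -/
theorem matroid_local_search_guarantee
    {X : Type*} [Fintype X] (M : Matroid X) (f : Set X → ℝ)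
    (hf0 : ∀ S : Set X, 0 ≤ f S) (hf : SubmodularOn f)
    (S : Set X) (hS : M.Indep S)
    (hAdd : ∀ i ∉ S, M.Indep (insert i S) → f (insert i S) ≤ f S)
    (hDel : ∀ i ∈ S, M.Indep (S \ {i}) → f (S \ {i}) ≤ f S)
    (hSwap : ∀ i ∉ S, ∀ j ∈ S, M.Indep (insert i (S \ {j})) →
      f (insert i (S \ {j})) ≤ f S)
    (C : Set X) (hC : M.Indep C) :
    f (S ∪ C) + f (S ∩ C) ≤ 2 * f S ∧ f (S ∪ C) ≤ f (S ∪ C) + f (S ∩ C) := by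
  classical
  refine ⟨?_, le_add_of_nonneg_right (hf0 _)⟩
  obtain ⟨σ, hσinj, hσ⟩ := hS.exists_injOn_exchange hC S.toFinite
  have hgain : ∑ b ∈ (C \ S).toFinset, (f (insert b S) - f S) ≤
      ∑ e ∈ (S \ C).toFinset, (f S - f (S \ {e})) := by
    refine Finset.sum_le_sum_of_injOn_of_nonpos (fun b => ¬ M.Indep (insert b S))
      (fun b hb hdep => ?_) (by simpa using hσinj) (fun b hb hdep => ?_)
      (fun b hb hind => ?_) (fun e he => ?_)
    · simpa using (hσ b (by simpa using hb) hdep).1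
    · obtain ⟨hσb, hswap⟩ := hσ b (by simpa using hb) hdep
      have hbS : b ∉ S := (mem_toFinset.1 hb).2
      have := hf.insert_sub_le_of_subset (sdiff_subset (t := {σ b})) hbS
      linarith [hSwap b hbS (σ b) hσb.1 hswap]
    · have hbS : b ∉ S := (mem_toFinset.1 hb).2
      linarith [hAdd b hbS (not_not.1 hind)]
    · have heS : e ∈ S := (mem_toFinset.1 he).1
      linarith [hDel e heS (hS.subset sdiff_subset)]
  have hadd := hf.le_add_sum_insert_sub S (C \ S).toFinset
  have hdel := hf.sum_sub_sdiff_singleton_le S (S \ C).toFinset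
  rw [coe_toFinset, union_sdiff_self] at hadd
  rw [coe_toFinset, sdiff_sdiff_right_self] at hdel
  linarith
end

section
/- Symmetry gap of the two-hyperedge instance: Let F : [0,1]^{2k+2} → ℝ be defined on variables (x_a, x_b, x_{a_1},...,x_{a_k}, x_{b_1},...,x_{b_k}) as the multilinear extension of the directed-hypergraph cut function with hyperedges ({a_1,...,a_k}, a) and ({b_1,...,b_k}, b), each of weight 1. Then F(1/2, 1/2, 1/(2k), ..., 1/(2k)) = 1 - (1 - 1/(2k))^k, and this quantity converges to 1 - e^{-1/2} as k → ∞. -/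
open Filter

/-- Vertices of the two-hyperedge instance: `Sum.inl 0 = a`, `Sum.inl 1 = b`,
`Sum.inr (0, i) = aᵢ`, `Sum.inr (1, i) = bᵢ`. -/
abbrev TwoEdgeVertex (k : ℕ) := Fin 2 ⊕ (Fin 2 × Fin k)

/-- The directed-hypergraph cut function of the instance with hyperedges
`({a₁,…,a_k}, a)` and `({b₁,…,b_k}, b)`, each of weight 1. -/
noncomputable def twoEdgeCut (k : ℕ) (S : Finset (TwoEdgeVertex k)) : ℝ :=
  (if (∃ i : Fin k, Sum.inr (0, i) ∈ S) ∧ Sum.inl 0 ∉ S then 1 else 0) +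
  (if (∃ i : Fin k, Sum.inr (1, i) ∈ S) ∧ Sum.inl 1 ∉ S then 1 else 0)

/-- The symmetric point `(1/2, 1/2, 1/(2k), …, 1/(2k))`. -/
noncomputable def symPoint (k : ℕ) : TwoEdgeVertex k → ℝ :=
  Sum.elim (fun _ => 1 / 2) (fun _ => 1 / (2 * (k : ℝ)))

lemma sum_prod_compl {X : Type*} [Fintype X] [DecidableEq X] (u v : X → ℝ) :
    ∑ S : Finset X, (∏ i ∈ S, u i) * ∏ j ∈ Sᶜ, v j = ∏ i, (u i + v i) := by
  rw [Finset.prod_add]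
  rw [← Finset.powerset_univ]
  refine (Finset.sum_congr rfl fun S _ => ?_).symm
  rw [Finset.compl_eq_univ_sdiff]

lemma sum_disjoint {X : Type*} [Fintype X] [DecidableEq X] (T : Finset X) (x : X → ℝ) :
    ∑ S : Finset X, (if ∀ j ∈ T, j ∉ S then (1:ℝ) else 0) *
      ((∏ i ∈ S, x i) * ∏ j ∈ Sᶜ, (1 - x j)) = ∏ j ∈ T, (1 - x j) := by
  have h : ∀ S : Finset X, (if ∀ j ∈ T, j ∉ S then (1:ℝ) else 0) * ∏ i ∈ S, x i
      = ∏ i ∈ S, (if i ∈ T then 0 else x i) := by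
    intro S
    by_cases hd : ∀ j ∈ T, j ∉ S
    · rw [if_pos hd, one_mul]
      exact Finset.prod_congr rfl fun i hi => by
        rw [if_neg (fun hiT => hd i hiT hi)]
    · rw [if_neg hd, zero_mul]
      push_neg at hd
      obtain ⟨j, hjT, hjS⟩ := hd
      exact (Finset.prod_eq_zero hjS (by simp [hjT])).symm
  calc ∑ S : Finset X, (if ∀ j ∈ T, j ∉ S then (1:ℝ) else 0) *
        ((∏ i ∈ S, x i) * ∏ j ∈ Sᶜ, (1 - x j))
      = ∑ S : Finset X, (∏ i ∈ S, (if i ∈ T then 0 else x i)) * ∏ j ∈ Sᶜ, (1 - x j) := by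
        refine Finset.sum_congr rfl fun S _ => ?_
        rw [← mul_assoc, h S]
    _ = ∏ i, ((if i ∈ T then 0 else x i) + (1 - x i)) := sum_prod_compl _ _
    _ = ∏ j ∈ T, (1 - x j) := by
        rw [← Finset.prod_mul_prod_compl T]
        have h1 : ∀ i ∈ T, ((if i ∈ T then (0:ℝ) else x i) + (1 - x i)) = 1 - x i := by
          intro i hi; simp [hi]
        have h2 : ∀ i ∈ Tᶜ, ((if i ∈ T then (0:ℝ) else x i) + (1 - x i)) = 1 := by
          intro i hi; simp at hi; simp [hi]
        rw [Finset.prod_congr rfl h1, Finset.prod_congr rfl h2, Finset.prod_const_one,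
          mul_one]

/-- Symmetry gap of the two-hyperedge instance: the multilinear extension evaluated at
the symmetric point equals `1 - (1 - 1/(2k))^k`, which tends to `1 - e^{-1/2}`. -/
theorem symmetry_gap_two_hyperedges :
    (∀ k : ℕ, 0 < k →
      mExt (twoEdgeCut k) (symPoint k) = 1 - (1 - 1 / (2 * (k : ℝ))) ^ k) ∧
    Tendsto (fun k : ℕ => 1 - (1 - 1 / (2 * (k : ℝ))) ^ k) atTop
      (nhds (1 - Real.exp (-(1 / 2)))) := by
  constructor
  · intro k hk
    set T1 : Fin 2 → Finset (TwoEdgeVertex k) := fun c => {Sum.inl c} with hT1def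
    set T2 : Fin 2 → Finset (TwoEdgeVertex k) := fun c =>
      insert (Sum.inl c) (Finset.univ.image (fun i : Fin k => (Sum.inr (c, i) : TwoEdgeVertex k)))
      with hT2def
    have hedge : ∀ (c : Fin 2) (S : Finset (TwoEdgeVertex k)),
        (if (∃ i : Fin k, Sum.inr (c, i) ∈ S) ∧ Sum.inl c ∉ S then (1:ℝ) else 0)
          = (if ∀ j ∈ T1 c, j ∉ S then (1:ℝ) else 0)
            - (if ∀ j ∈ T2 c, j ∉ S then (1:ℝ) else 0) := by
      intro c S
      by_cases h1 : Sum.inl c ∈ S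
      · simp [hT1def, hT2def, h1]
      · by_cases h2 : ∃ i : Fin k, Sum.inr (c, i) ∈ S
        · obtain ⟨i, hi⟩ := h2
          simp only [hT1def, hT2def, Finset.mem_singleton, Finset.mem_insert,
            Finset.mem_image, Finset.mem_univ, true_and]
          rw [if_pos ⟨⟨i, hi⟩, h1⟩, if_pos (by rintro j hj; rw [hj]; exact h1),
            if_neg (by push_neg; exact ⟨Sum.inr (c, i), Or.inr ⟨i, rfl⟩, hi⟩)]
          norm_num
        · push_neg at h2
          simp only [hT1def, hT2def]
          rw [if_neg (by push_neg; intro ⟨i, hi⟩; exact absurd hi (h2 i)),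
            if_pos (by rintro j hj; rw [Finset.mem_singleton] at hj; rw [hj]; exact h1),
            if_pos ?_]
          · norm_num
          · intro j hj
            rcases Finset.mem_insert.mp hj with h | h
            · rw [h]; exact h1
            · obtain ⟨i, _, rfl⟩ := Finset.mem_image.mp h
              exact h2 i
    have hsplit : mExt (twoEdgeCut k) (symPoint k)
        = (∏ j ∈ T1 0, (1 - symPoint k j)) - (∏ j ∈ T2 0, (1 - symPoint k j))
          + ((∏ j ∈ T1 1, (1 - symPoint k j)) - (∏ j ∈ T2 1, (1 - symPoint k j))) := by
      rw [← sum_disjoint (T1 0), ← sum_disjoint (T2 0), ← sum_disjoint (T1 1),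
        ← sum_disjoint (T2 1)]
      unfold mExt twoEdgeCut
      rw [← Finset.sum_sub_distrib, ← Finset.sum_sub_distrib, ← Finset.sum_add_distrib]
      refine Finset.sum_congr rfl fun S _ => ?_
      rw [hedge 0 S, hedge 1 S]
      ring
    have hinj : ∀ c : Fin 2, Function.Injective
        (fun i : Fin k => (Sum.inr (c, i) : TwoEdgeVertex k)) := by
      intro c i j h; simpa using h
    have hT1 : ∀ c : Fin 2, ∏ j ∈ T1 c, (1 - symPoint k j) = 1 / 2 := by
      intro c; simp [hT1def, symPoint]; norm_num
    have hT2 : ∀ c : Fin 2, ∏ j ∈ T2 c, (1 - symPoint k j)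
        = 1 / 2 * (1 - 1 / (2 * (k : ℝ))) ^ k := by
      intro c
      rw [hT2def]
      rw [Finset.prod_insert (by simp)]
      rw [Finset.prod_image (fun i _ j _ h => hinj c h)]
      simp [symPoint]
      norm_num
    rw [hsplit, hT1 0, hT1 1, hT2 0, hT2 1]
    ring
  · have h := Real.tendsto_one_add_div_pow_exp (-(1 / 2))
    have heq : (fun n : ℕ => (1 + (-(1 / 2)) / (n : ℝ)) ^ n)
        = fun n : ℕ => (1 - 1 / (2 * (n : ℝ))) ^ n := by
      funext n
      congr 1
      rw [neg_div, ← sub_eq_add_neg, div_div]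
    rw [heq] at h
    exact (tendsto_const_nhds.sub h)
end

section
/- Matroid exchange mapping: For any two independent sets C, I in a matroid M = (X, I), there exists an injective-on-its-nonzero-part mapping m : C \ I → (I \ C) ∪ {0} such that for each i ∈ C \ I, either m(i) = 0 and I + i is independent, or m(i) ∈ I \ C and I - m(i) + i is independent, and each element of I \ C is used as m(i) for at most one i. -/
/-!
The elements of `C \ I` not spanned by `I` are sent to `0`. An element `e ∈ C \ I` spanned by
`I` may be exchanged with exactly the elements of its fundamental circuit in `I`, and we match
it to one of them outside `C` by Hall's theorem. Hall's condition holds because a set `A` of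
such elements is spanned by `(I ∩ C) ∪ N`, where `N` collects their partners; since
`A ∪ (I ∩ C) ⊆ C` is independent, contracting `I ∩ C` gives `|A| ≤ r(N) ≤ |N|`.
-/

open Set

namespace Matroid

variable {α : Type*} {M : Matroid α} {A C I K N : Set α} {e f : α}

lemma Indep.encard_le_encard_of_subset_closure_union (hAK : M.Indep (A ∪ K))
    (hdj : Disjoint A K) (hA : A ⊆ M.closure (N ∪ K)) : A.encard ≤ N.encard := by
  have hK : M.Indep K := hAK.subset subset_union_right
  have hAK' : (M ／ K).Indep A := hK.contract_indep_iff.2 ⟨hdj, hAK⟩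
  have hAN : A ⊆ (M ／ K).closure N := by
    rw [contract_closure_eq]
    exact subset_sdiff.2 ⟨hA, hdj⟩
  calc A.encard ≤ (M ／ K).eRk ((M ／ K).closure N) := hAK'.encard_le_eRk_of_subset hAN
    _ = (M ／ K).eRk N := eRk_closure_eq _ _
    _ ≤ N.encard := eRk_le_encard _ _

lemma Indep.exchange_of_mem_fundCircuit_sdiff (hI : M.Indep I) (he : e ∈ (C \ I) ∩ M.closure I)
    (hf : f ∈ M.fundCircuit e I \ C) : f ∈ I \ C ∧ M.Indep (insert e (I \ {f})) := by
  have hfe : f ≠ e := fun hfe ↦ hf.2 (hfe ▸ he.1.1)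
  refine ⟨⟨?_, hf.2⟩, ?_⟩
  · exact (M.fundCircuit_subset_insert e I hf.1).resolve_left hfe
  · rw [insert_sdiff_singleton_comm hfe.symm, ← hI.mem_fundCircuit_iff he.2 he.1.2]
    exact hf.1

lemma Indep.mem_closure_fundCircuit_inter (hI : M.Indep I) (he : e ∈ M.closure I) (heI : e ∉ I) :
    e ∈ M.closure (M.fundCircuit e I ∩ I) := by
  rw [← fundCircuit_sdiff_eq_inter M heI]
  exact (hI.fundCircuit_isCircuit he heI).mem_closure_sdiff_singleton_of_mem (mem_fundCircuit ..)

lemma Indep.encard_le_encard_biUnion_fundCircuit_sdiff (hC : M.Indep C) (hI : M.Indep I)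
    (hA : A ⊆ (C \ I) ∩ M.closure I) :
    A.encard ≤ (⋃ e ∈ A, M.fundCircuit e I \ C).encard := by
  refine Indep.encard_le_encard_of_subset_closure_union (K := I ∩ C)
    (hC.subset (union_subset (fun e he ↦ (hA he).1.1) inter_subset_right))
    (disjoint_left.2 fun e he heIC ↦ (hA he).1.2 heIC.1) fun e he ↦ ?_
  obtain ⟨⟨-, heI⟩, hecl⟩ := hA he
  refine M.closure_subset_closure (fun f hf ↦ ?_) (hI.mem_closure_fundCircuit_inter hecl heI)
  by_cases hfC : f ∈ C
  · exact Or.inr ⟨hf.2, hfC⟩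
  · exact Or.inl (mem_biUnion he ⟨hf.1, hfC⟩)

end Matroid

/-- Matroid exchange mapping: for independent sets `C` and `I` in a matroid, there is a
mapping `m : C \ I → (I \ C) ∪ {0}` (here `0` is encoded by `none`) such that for each
`i ∈ C \ I` either `I + i` is independent (when `m i = none`), or `m i = some j` with
`j ∈ I \ C` and `I - j + i` independent; and each element of `I \ C` is used at most
once. -/
theorem matroid_exchange_mapping
    {X : Type*} [Fintype X] (M : Matroid X) (C I : Set X)
    (hC : M.Indep C) (hI : M.Indep I) :
    ∃ m : X → Option X,
      (∀ i ∈ C \ I,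
        (m i = none ∧ M.Indep (insert i I)) ∨
        (∃ j, m i = some j ∧ j ∈ I \ C ∧ M.Indep (insert i (I \ {j})))) ∧
      (∀ i₁ ∈ C \ I, ∀ i₂ ∈ C \ I, ∀ j : X,
        m i₁ = some j → m i₂ = some j → i₁ = i₂) := by
  classical
  set S := (C \ I) ∩ M.closure I
  have hall : ∀ A : Finset S,
      A.card ≤ (A.biUnion fun e ↦ (M.fundCircuit e I \ C).toFinset).card := by
    intro A
    have h := hC.encard_le_encard_biUnion_fundCircuit_sdiff hI
      (A := Subtype.val '' (A : Set S)) (image_subset_iff.2 fun e _ ↦ e.2)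
    rw [Subtype.val_injective.encard_image, encard_coe_eq_coe_finsetCard] at h
    rw [← Nat.cast_le (α := ℕ∞)]
    refine h.trans_eq ?_
    rw [← encard_coe_eq_coe_finsetCard]
    congr 1
    ext; simp
  obtain ⟨f, hf_inj, hf⟩ := (Finset.all_card_le_biUnion_card_iff_exists_injective _).1 hall
  refine ⟨fun e ↦ if he : e ∈ S then some (f ⟨e, he⟩) else none, fun e he ↦ ?_, ?_⟩
  · by_cases heS : e ∈ S
    · exact .inr ⟨_, dif_pos heS,
        hI.exchange_of_mem_fundCircuit_sdiff heS (by simpa using hf ⟨e, heS⟩)⟩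
    · exact .inl ⟨dif_neg heS, (hI.insert_indep_iff_of_notMem he.2).2
        ⟨hC.subset_ground he.1, fun hcl ↦ heS ⟨he, hcl⟩⟩⟩
  · intro e₁ _ e₂ _ j h₁ h₂
    simp only [Option.dite_none_right_eq_some, Option.some_inj] at h₁ h₂
    obtain ⟨_, rfl⟩ := h₁
    obtain ⟨_, h⟩ := h₂
    exact congrArg Subtype.val (hf_inj h).symm
end
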